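/- Let α = [0;1+d₁,\overline{d₂,…,dₙ}] be a Sturm number of type (i) (dₙ ≥ d₁ ≥ 1) and let σ be its associated standard morphism. Then c_{1−α} = lim_{m→∞} (EσE)^m(b) = σ̂^ω(b), where σ̂ = EσE; that is, the characteristic Sturmian word of slope 1−α is generated by the standard morphism EσE from the letter b. -/

import Mathlib

/-- The two-letter alphabet 𝒜 = {a, b}. -/
inductive AB : Type
  | a : AB
  | b : AB
deriving DecidableEq, Repr

/-- Apply a morphism (determined by its images on the letters) to a finite word. -/
def applyM (g : AB → List AB) (w : List AB) : List AB := w.flatMap g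

/-- The exchange morphism E : a ↦ b, b ↦ a. -/
def Em : AB → List AB
  | AB.a => [AB.b]
  | AB.b => [AB.a]

/-- The morphism φ : a ↦ ab, b ↦ a. -/
def phim : AB → List AB
  | AB.a => [AB.a, AB.b]
  | AB.b => [AB.a]

/-- Composition of morphisms: `compM g h` applies `h` first, then `g`. -/
def compM (g h : AB → List AB) : AB → List AB := fun c => applyM g (h c)

/-- Powers of a morphism. -/
def mpow (g : AB → List AB) : ℕ → AB → List AB
  | 0 => fun c => [c]
  | n + 1 => compM g (mpow g n)

/-- A morphism is standard iff it is a composition of E and φ (in any number and order). -/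
inductive IsStandard : (AB → List AB) → Prop
  | id : IsStandard (fun c => [c])
  | compE {ψ : AB → List AB} : IsStandard ψ → IsStandard (compM ψ Em)
  | compPhi {ψ : AB → List AB} : IsStandard ψ → IsStandard (compM ψ phim)

/-- `IsRightConj ψ ξ k` : ξ is the k-th right conjugate of ψ, i.e. there is a word u
of length k with ψ(w)u = uξ(w) for all finite words w. -/
def IsRightConj (ψ ξ : AB → List AB) (k : ℕ) : Prop :=
  ∃ u : List AB, u.length = k ∧ ∀ w : List AB, applyM ψ w ++ u = u ++ applyM ξ w

/-- w^k (power of a finite word under concatenation). -/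
def lpow (w : List AB) : ℕ → List AB
  | 0 => []
  | k + 1 => w ++ lpow w k

/-- Standard sequence associated with a directive sequence (d₁, d₂, …) (here `d`
is indexed so that `d i` is dᵢ for i ≥ 1): `sseq d 0 = s₋₁ = b`, `sseq d (n+1) = sₙ`,
with s₀ = a and sₙ = sₙ₋₁^{dₙ} sₙ₋₂. -/
def sseq (d : ℕ → ℕ) : ℕ → List AB
  | 0 => [AB.b]
  | 1 => [AB.a]
  | n + 2 => lpow (sseq d (n + 1)) (d (n + 1)) ++ sseq d n

/-- Convergent denominators: `qseq d n` = qₙ = |sₙ| (q₀ = 1, q₁ = 1 + d₁,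
qₙ = dₙqₙ₋₁ + qₙ₋₂). -/
def qseq (d : ℕ → ℕ) : ℕ → ℕ
  | 0 => 1
  | 1 => 1 + d 1
  | n + 2 => d (n + 2) * qseq d (n + 1) + qseq d n

/-- `PrefInf u x` : the finite word u is a prefix of the infinite word x. -/
def PrefInf (u : List AB) (x : ℕ → AB) : Prop :=
  ∀ i, i < u.length → u.getD i AB.a = x i

/-- Image of an infinite word under a (non-erasing) morphism, letter by letter. -/
def applyInf (g : AB → List AB) (x : ℕ → AB) : ℕ → AB :=
  fun i => (applyM g ((List.range (i + 1)).map x)).getD i AB.a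

/-- `IsProdInf u x` : the infinite word x is the infinite product u 0 · u 1 · u 2 ⋯,
i.e. every finite partial product is a prefix of x. -/
def IsProdInf (u : ℕ → List AB) (x : ℕ → AB) : Prop :=
  ∀ n, PrefInf (((List.range n).map u).flatten) x

/-- Adjoining singular words: `vword d k` is the adjoining singular word v_{k-1}
(so `vword d 0 = v₋₁`), where vₙ = a·sₙ₊₁^{d_{n+2}−1}sₙ·b⁻¹ for n odd and
vₙ = b·sₙ₊₁^{d_{n+2}−1}sₙ·a⁻¹ for n even. -/
def vword (d : ℕ → ℕ) (k : ℕ) : List AB :=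
  (if k % 2 = 0 then AB.a else AB.b) ::
    (lpow (sseq d (k + 1)) (d (k + 1) - 1) ++ sseq d k).dropLast

/-- Singular words: `wword d k` is the singular word w_{k-2}
(w₋₂ = ε, w₋₁ = a, w₀ = b, and wₙ = a·sₙ·b⁻¹ for n ≥ 1 odd, wₙ = b·sₙ·a⁻¹ for n even). -/
def wword (d : ℕ → ℕ) : ℕ → List AB
  | 0 => []
  | 1 => [AB.a]
  | 2 => [AB.b]
  | k + 3 =>
      (if (k + 1) % 2 = 1 then AB.a else AB.b) :: (sseq d (k + 2)).dropLast

/-- The standard morphism σ associated with a type (i) Sturm number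
α = [0;1+d₁,\overline{d₂,…,dₙ}] : σ(a) = sₙ₋₁, σ(b) = sₙ₋₁^{dₙ−d₁} sₙ₋₂. -/
def sigmaGen (d : ℕ → ℕ) (n : ℕ) : AB → List AB
  | AB.a => sseq d n
  | AB.b => lpow (sseq d n) (d n - d 1) ++ sseq d (n - 1)

/-- The directive sequence of α = [0;2,\overline{r}] : d₁ = 1, dᵢ = r for i ≥ 2. -/
def dseq (r : ℕ) : ℕ → ℕ := fun i => if i ≤ 1 then 1 else r

/-- The directive sequence of 1 − α = [0;1,d₁,\overline{d₂,…,dₙ}] obtained from that of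
α = [0;1+d₁,\overline{d₂,…,dₙ}] : ê₁ = 0 and êᵢ = dᵢ₋₁ for i ≥ 2. -/
def dhat (d : ℕ → ℕ) : ℕ → ℕ := fun i => if i ≤ 1 then 0 else d (i - 1)

/-- `Generates ψ c x` : ψ is prolongable on the letter c and x = ψ^ω(c), i.e. every
ψ^m(c) is a prefix of x. -/
def Generates (ψ : AB → List AB) (c : AB) (x : ℕ → AB) : Prop :=
  (∃ w : List AB, w ≠ [] ∧ ψ c = c :: w) ∧ ∀ m, PrefInf (mpow ψ m c) x

/-- Fibonacci numbers, shifted: `fibw k = F_{k-1}`, so fibw 0 = F₋₁ = 1,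
fibw 1 = F₀ = 1, Fₙ = Fₙ₋₁ + Fₙ₋₂. -/
def fibw : ℕ → ℕ
  | 0 => 1
  | 1 => 1
  | n + 2 => fibw (n + 1) + fibw n

/-- `HasCF γ a` : γ has continued fraction expansion [0; a 1, a 2, a 3, …]. -/
def HasCF (γ : ℝ) (a : ℕ → ℕ) : Prop :=
  ∃ x : ℕ → ℝ, x 0 = γ ∧ (∀ i, 0 < x i ∧ x i < 1) ∧
    ∀ i, 1 / x i = (a (i + 1) : ℝ) + x (i + 1)

/-- γ has a continued fraction expansion of type (i):
γ = [0;1+d₁,\overline{d₂,…,dₙ}] < 1/2 with dₙ ≥ d₁ ≥ 1. -/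
def CFTypeI (γ : ℝ) : Prop :=
  ∃ a : ℕ → ℕ, HasCF γ a ∧ γ < 1 / 2 ∧
    ∃ n : ℕ, 2 ≤ n ∧ ∃ d : ℕ → ℕ,
      (∀ i, 1 ≤ i → 1 ≤ d i) ∧ a 1 = 1 + d 1 ∧ (∀ i, 2 ≤ i → a i = d i) ∧
      (∀ i, 2 ≤ i → d (i + (n - 1)) = d i) ∧ d 1 ≤ d n

/-- γ has a continued fraction expansion of type (ii):
γ = [0;1,d₁,\overline{d₂,…,dₙ}] > 1/2 with dₙ ≥ d₁. -/
def CFTypeII (γ : ℝ) : Prop :=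
  ∃ a : ℕ → ℕ, HasCF γ a ∧ 1 / 2 < γ ∧
    ∃ n : ℕ, 2 ≤ n ∧ ∃ d : ℕ → ℕ,
      (∀ i, 1 ≤ i → 1 ≤ d i) ∧ a 1 = 1 ∧ (∀ i, 2 ≤ i → a i = d (i - 1)) ∧
      (∀ i, 2 ≤ i → d (i + (n - 1)) = d i) ∧ d 1 ≤ d n

/-- A Sturm number: an irrational γ ∈ (0,1) whose continued fraction expansion is of
type (i) or type (ii). -/
def IsSturmNumber (γ : ℝ) : Prop :=
  Irrational γ ∧ 0 < γ ∧ γ < 1 ∧ (CFTypeI γ ∨ CFTypeII γ)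

/-! σ shifts the standard sequence of α by n − 1 places, σ(sₖ) = sₖ₊ₙ₋₁: for k = 1 this is
where σ(b) = sₙ₋₁^{dₙ−d₁}sₙ₋₂ comes from, and the periodicity of (dᵢ) carries the recursion.
Hence σ^j(a) = s_{j(n−1)}. Since 1 − α = [0;1,d₁,d₂,…], the standard sequence of 1 − α is the
image under E of that of α, shifted by one, so (EσE)^j(b) = E(σ^j(a)) is a standard word of 1 − α
and thus a prefix of c_{1−α}. Prolongability: (EσE)(b) = E(sₙ₋₁) begins with E(a) = b and, as all
dᵢ ≥ 1, has length at least 2. -/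

lemma applyM_append (g : AB → List AB) (u v : List AB) :
    applyM g (u ++ v) = applyM g u ++ applyM g v :=
  List.flatMap_append ..

lemma applyM_singleton (g : AB → List AB) (c : AB) : applyM g [c] = g c := by
  simp [applyM]

lemma applyM_lpow (g : AB → List AB) (w : List AB) (k : ℕ) :
    applyM g (lpow w k) = lpow (applyM g w) k := by
  induction k with
  | zero => rfl
  | succ k ih => simp only [lpow, applyM_append, ih]

lemma applyM_compM (g h : AB → List AB) (w : List AB) :
    applyM (compM g h) w = applyM g (applyM h w) :=
  (List.flatMap_assoc ..).symm

lemma applyM_Em_applyM_Em (w : List AB) : applyM Em (applyM Em w) = w := by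
  induction w with
  | nil => rfl
  | cons c w ih => cases c <;> simpa [applyM, Em] using ih

lemma lpow_add (w : List AB) (j k : ℕ) : lpow w (j + k) = lpow w j ++ lpow w k := by
  induction j with
  | zero => simp [lpow]
  | succ j ih => simp [Nat.succ_add, lpow, ih]

lemma mpow_conj_Em (g : AB → List AB) (j : ℕ) :
    mpow (compM Em (compM g Em)) j = compM Em (compM (mpow g j) Em) := by
  induction j with
  | zero => funext c; cases c <;> rfl
  | succ j ih =>
    funext c
    simp only [mpow, ih, compM, applyM_compM, applyM_Em_applyM_Em]

lemma sseq_add_two (d : ℕ → ℕ) (k : ℕ) :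
    sseq d (k + 2) = lpow (sseq d (k + 1)) (d (k + 1)) ++ sseq d k :=
  rfl

lemma exists_sseq_add_two_eq_a_cons {d : ℕ → ℕ} (hd : ∀ i, 1 ≤ i → 1 ≤ d i) (k : ℕ) :
    ∃ t, t ≠ [] ∧ sseq d (k + 2) = AB.a :: t := by
  induction k with
  | zero =>
    obtain ⟨e, he⟩ := Nat.exists_eq_add_one.mpr (hd 1 le_rfl)
    exact ⟨lpow [AB.a] e ++ [AB.b], by simp, by rw [sseq_add_two, he]; rfl⟩
  | succ k ih =>
    obtain ⟨t, ht, hs⟩ := ih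
    obtain ⟨e, he⟩ := Nat.exists_eq_add_one.mpr (hd (k + 2) (by omega))
    refine ⟨t ++ lpow (sseq d (k + 2)) e ++ sseq d (k + 1), by simp [ht], ?_⟩
    rw [sseq_add_two, he, lpow, hs]
    simp

lemma sseq_dhat_succ (d : ℕ → ℕ) : ∀ k, sseq (dhat d) (k + 1) = applyM Em (sseq d k)
  | 0 => rfl
  | 1 => rfl
  | k + 2 => by
    rw [sseq_add_two (dhat d) (k + 1), sseq_add_two d k, applyM_append, applyM_lpow,
      ← sseq_dhat_succ d (k + 1), ← sseq_dhat_succ d k]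
    simp [dhat]

lemma applyM_sigmaGen_sseq {n : ℕ} (hn : 1 ≤ n) {d : ℕ → ℕ}
    (hper : ∀ i, 2 ≤ i → d (i + (n - 1)) = d i) (hdn : d 1 ≤ d n) :
    ∀ k, applyM (sigmaGen d n) (sseq d (k + 1)) = sseq d (n + k) := by
  obtain ⟨m, rfl⟩ : ∃ m, n = m + 1 := Nat.exists_eq_add_one.mpr hn
  intro k
  induction k using Nat.twoStepInduction with
  | zero => exact applyM_singleton _ _
  | one =>
    show applyM _ (lpow [AB.a] (d 1) ++ [AB.b]) = sseq d (m + 2)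
    rw [applyM_append, applyM_lpow, applyM_singleton, applyM_singleton, sseq_add_two]
    simp only [sigmaGen, Nat.add_sub_cancel]
    rw [← List.append_assoc, ← lpow_add, Nat.add_sub_cancel' hdn]
  | more k ih₀ ih₁ =>
    have hdk : d (k + 2) = d (m + 1 + k + 1) := by
      rw [← hper (k + 2) (by omega)]
      congr 1
      omega
    rw [sseq_add_two d (k + 1), applyM_append, applyM_lpow, ih₀, ih₁, hdk]
    exact (sseq_add_two d (m + 1 + k)).symm

lemma mpow_sigmaGen_a {n : ℕ} (hn : 1 ≤ n) {d : ℕ → ℕ}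
    (hper : ∀ i, 2 ≤ i → d (i + (n - 1)) = d i) (hdn : d 1 ≤ d n) (j : ℕ) :
    mpow (sigmaGen d n) j AB.a = sseq d (j * (n - 1) + 1) := by
  induction j with
  | zero => rw [zero_mul]; rfl
  | succ j ih =>
    rw [mpow, compM, ih, applyM_sigmaGen_sseq hn hper hdn]
    congr 1
    rw [add_mul]
    omega

/-- For a type (i) Sturm number α = [0;1+d₁,\overline{d₂,…,dₙ}]
(dₙ ≥ d₁ ≥ 1), c_{1−α} = (EσE)^ω(b): the morphism σ̂ = EσE is prolongable on b and
every σ̂^m(b) is a prefix of c_{1−α}, where c_{1−α} is the characteristic Sturmian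
word of slope 1 − α = [0;1,d₁,\overline{d₂,…,dₙ}] (standard sequence `sseq (dhat d)`). -/
theorem statement8 (n : ℕ) (hn : 2 ≤ n) (d : ℕ → ℕ)
    (hd : ∀ i, 1 ≤ i → 1 ≤ d i)
    (hper : ∀ i, 2 ≤ i → d (i + (n - 1)) = d i)
    (hdn : d 1 ≤ d n)
    (ch : ℕ → AB) (hch : ∀ k, PrefInf (sseq (dhat d) (k + 1)) ch) :
    Generates (compM Em (compM (sigmaGen d n) Em)) AB.b ch := by
  have hσ_pow (j : ℕ) : mpow (compM Em (compM (sigmaGen d n) Em)) j AB.b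
      = sseq (dhat d) (j * (n - 1) + 2) := by
    rw [mpow_conj_Em]
    show applyM Em (applyM _ [AB.a]) = _
    rw [applyM_singleton, mpow_sigmaGen_a (by omega) hper hdn, ← sseq_dhat_succ]
  refine ⟨?_, fun j => hσ_pow j ▸ hch _⟩
  obtain ⟨m, rfl⟩ : ∃ m, n = m + 2 := ⟨n - 2, by omega⟩
  obtain ⟨t, ht, hs⟩ := exists_sseq_add_two_eq_a_cons hd m
  refine ⟨applyM Em t, ?_, ?_⟩
  · exact fun h => ht (by rw [← applyM_Em_applyM_Em t, h]; rfl)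
  · show applyM Em (applyM _ [AB.a]) = _
    rw [applyM_singleton, sigmaGen, hs]
    rfl
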